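/- Let μ ≥ 1, ℓ ≥ 0, m ≥ 0 be integers, set M = 2ℓ + 6m + 3 and σ = −(2ℓ + 4m + 2)·k. Then for every κ ∈ {0,1}, every λ ∈ {0,1}, and every integer k with gcd(k, M) = 1, one has H_M( q^σ · f((−1)^κ q^k, (−1)^κ q^{μM−k})^{2ℓ} · ( f(−q^{2k}, −q^{μM−2k}) / f((−1)^λ q^k, (−1)^λ q^{μM−k}) )^{2m+1} ) = 0. -/

import Mathlib

/-!
Common setup: Ramanujan theta series as formal Laurent series over `ℚ`
(`LaurentSeries ℚ = HahnSeries ℤ ℚ`), and the huffing operator `H_M`.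
-/

noncomputable section

open scoped Classical

namespace ThetaVanish

/-- A subset of `ℤ` that is bounded below is partially well-ordered. -/
theorem isPWO_of_subset_Ici {a : ℤ} {s : Set ℤ} (h : s ⊆ Set.Ici a) : s.IsPWO := by
  have hWF : s.IsWF := by
    rw [Set.isWF_iff_no_descending_seq]
    intro f hf hmem
    have key : ∀ n : ℕ, f n + n ≤ f 0 := by
      intro n
      induction n with
      | zero => simp
      | succ k ih =>
        have h2 : f (k + 1) < f k := hf (Nat.lt_succ_self k)
        push_cast
        push_cast at ih
        omega
    have h1 := key (f 0 - a + 1).toNat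
    have h2 : a ≤ f ((f 0 - a + 1).toNat) := h (hmem _)
    have h3 : a ≤ f 0 := h (hmem 0)
    omega
  exact hWF.isPWO

/-- The coefficient of `q^N` in Ramanujan's theta series `f(ε q^r, ε q^s)`:
the (finite, when `r + s > 0`) sum of `ε^n` over all integers `n` with
`r·n(n+1)/2 + s·n(n-1)/2 = N`. -/
def thetaCoeff (ε r s : ℤ) : ℤ → ℚ := fun N =>
  ∑ᶠ n : ℤ, if r * (n * (n + 1) / 2) + s * (n * (n - 1) / 2) = N then (ε : ℚ) ^ n else 0

theorem thetaCoeff_support (ε r s : ℤ) (h : 0 < r + s) :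
    Function.support (thetaCoeff ε r s) ⊆ Set.Ici (-(r - s) ^ 2) := by
  intro N hN
  simp only [Function.mem_support, ne_eq] at hN
  rw [Set.mem_Ici]
  by_contra hcon
  push_neg at hcon
  apply hN
  apply finsum_eq_zero_of_forall_eq_zero
  intro n
  rw [if_neg]
  intro hQ
  obtain ⟨c, hc⟩ := Int.even_mul_succ_self n
  obtain ⟨e, he⟩ := Int.even_mul_pred_self n
  have hc' : n * (n + 1) = 2 * c := by omega
  have he' : n * (n - 1) = 2 * e := by omega
  have e1 : n * (n + 1) / 2 = c := by omega
  have e2 : n * (n - 1) / 2 = e := by omega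
  rw [e1, e2] at hQ
  have key : 2 * N = (r + s) * n ^ 2 + (r - s) * n := by
    linear_combination -2 * hQ - r * hc' - s * he'
  nlinarith [sq_nonneg (2 * n + r - s), sq_nonneg (r - s),
    mul_nonneg (show (0:ℤ) ≤ r + s - 1 by omega) (sq_nonneg n)]

/-- Ramanujan's theta series `f(ε q^r, ε q^s)` (for a sign `ε ∈ {1, -1}` and
`r + s > 0`), as a formal Laurent series over `ℚ`; junk value `0` if `r + s ≤ 0`. -/
def theta (ε r s : ℤ) : LaurentSeries ℚ :=
  if h : 0 < r + s then
    { coeff := thetaCoeff ε r s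
      isPWO_support' := isPWO_of_subset_Ici (thetaCoeff_support ε r s h) }
  else 0

/-- The huffing operator `H_M`: keep only the coefficients whose index is a
multiple of `M`. -/
def huff (M : ℤ) (G : LaurentSeries ℚ) : LaurentSeries ℚ where
  coeff N := if M ∣ N then G.coeff N else 0
  isPWO_support' := by
    apply Set.IsPWO.mono G.isPWO_support
    intro N hN
    simp only [Function.mem_support, ne_eq] at hN
    rw [HahnSeries.mem_support]
    by_cases hd : M ∣ N
    · rwa [if_pos hd] at hN
    · exact absurd (if_neg hd) hN

/-!
With `t = μM`, the identities `f(a,b) f(-a,-b) = f(-a²,-b²) φ(-ab)` and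
`f(a,ab²) f(b,a²b) = f(a,b) ψ(ab)` rewrite the quotient
`f(-q^{2k},-q^{t-2k}) / f(εq^k,εq^{t-k})` as
`f(-εq^k,-εq^{t-k}) f(-q^{t-2k},-q^{t+2k}) / (ψ(q^t) φ(-q^t))`. The denominator is a series in
`q^M`, so it passes through `H_M`, and it remains to kill `H_M(q^σ A^a (C D)^b)`, where `A` is the
first theta factor, `C D` the new numerator, `a = 2ℓ`, `b = 2m+1` and `M = a + 3b`.

Expand that product over exponent tuples `(nᵢ; yⱼ, zⱼ)`. Its degree is `≡ k·L (mod t)` with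
`L = Σnᵢ + Σyⱼ - 2Σzⱼ`, so coprimality of `k` and `M` forces `L = (a+2b) + Mw` on every fibre
that `H_M` keeps. The reflection `n ↦ α - n`, `y ↦ α - y`, `z ↦ 1 - α - z` with `α = 2 + 2w`
preserves `L`, hence the degree, and changes the sign of the term because `b` is odd: the fibre
sums to zero.
-/

open HahnSeries

lemma sum_eq_zero_of_involution_neg {α : Type*} {s : Finset α} {f : α → ℚ} (ι : α → α)
    (h : ∀ x ∈ s, ι x ∈ s ∧ ι (ι x) = x ∧ f (ι x) = -f x) : ∑ x ∈ s, f x = 0 := by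
  refine Finset.sum_involution (fun x _ => ι x) (fun x hx => by rw [(h x hx).2.2]; ring)
    (fun x hx hne heq => hne ?_) (fun x hx => (h x hx).1) (fun x hx => (h x hx).2.1)
  have := (h x hx).2.2
  rw [heq] at this
  linarith

structure MonomialFamily (α : Type*) where
  deg : α → ℤ
  coeff : α → ℚ
  deg_bddBelow : BddBelow (Set.range deg)
  finite_deg_eq : ∀ N, {x | deg x = N}.Finite

namespace MonomialFamily

variable {α β : Type*}

def fiber (R : MonomialFamily α) (N : ℤ) : Finset α := (R.finite_deg_eq N).toFinset

@[simp]
lemma mem_fiber {R : MonomialFamily α} {N : ℤ} {x : α} : x ∈ R.fiber N ↔ R.deg x = N := by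
  simp [fiber]

def toSummableFamily (R : MonomialFamily α) : SummableFamily ℤ ℚ α where
  toFun x := single (R.deg x) (R.coeff x)
  isPWO_iUnion_support' := by
    obtain ⟨b, hb⟩ := R.deg_bddBelow
    refine isPWO_of_subset_Ici (a := b) (Set.iUnion_subset fun x => ?_)
    exact support_single_subset.trans (Set.singleton_subset_iff.2 (hb ⟨x, rfl⟩))
  finite_co_support' N := (R.finite_deg_eq N).subset fun x hx => by
    by_contra h
    exact hx (coeff_single_of_ne (Ne.symm h))

def sum (R : MonomialFamily α) : LaurentSeries ℚ := R.toSummableFamily.hsum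

lemma coeff_sum (R : MonomialFamily α) (N : ℤ) :
    R.sum.coeff N = ∑ x ∈ R.fiber N, R.coeff x := by
  rw [sum, SummableFamily.coeff_hsum_eq_sum_of_subset (t := R.fiber N)]
  · refine Finset.sum_congr rfl fun x hx => ?_
    rw [mem_fiber] at hx
    simp [toSummableFamily, hx]
  · intro x hx
    by_contra h
    exact hx (coeff_single_of_ne (Ne.symm (by simpa using h)))

def mul (R₁ : MonomialFamily α) (R₂ : MonomialFamily β) : MonomialFamily (α × β) where
  deg p := R₁.deg p.1 + R₂.deg p.2
  coeff p := R₁.coeff p.1 * R₂.coeff p.2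
  deg_bddBelow := by
    obtain ⟨b₁, hb₁⟩ := R₁.deg_bddBelow
    obtain ⟨b₂, hb₂⟩ := R₂.deg_bddBelow
    refine ⟨b₁ + b₂, ?_⟩
    rintro _ ⟨p, rfl⟩
    exact add_le_add (hb₁ ⟨p.1, rfl⟩) (hb₂ ⟨p.2, rfl⟩)
  finite_deg_eq N := by
    obtain ⟨b₁, hb₁⟩ := R₁.deg_bddBelow
    obtain ⟨b₂, hb₂⟩ := R₂.deg_bddBelow
    refine ((Set.finite_Icc b₁ (N - b₂)).biUnion
      fun i _ => (R₁.finite_deg_eq i).prod (R₂.finite_deg_eq (N - i))).subset ?_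
    rintro p (hp : _ = N)
    have h₁ := hb₁ ⟨p.1, rfl⟩
    have h₂ := hb₂ ⟨p.2, rfl⟩
    exact Set.mem_biUnion (x := R₁.deg p.1) ⟨h₁, by omega⟩ ⟨rfl, show _ = _ by omega⟩

lemma sum_mul (R₁ : MonomialFamily α) (R₂ : MonomialFamily β) :
    (R₁.mul R₂).sum = R₁.sum * R₂.sum := by
  have : (R₁.mul R₂).toSummableFamily = R₁.toSummableFamily.mul R₂.toSummableFamily :=
    SummableFamily.ext fun p => single_mul_single.symm
  rw [sum, this, SummableFamily.hsum_mul]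
  rfl

def comap (R : MonomialFamily α) (e : β ≃ α) : MonomialFamily β where
  deg := R.deg ∘ e
  coeff := R.coeff ∘ e
  deg_bddBelow := R.deg_bddBelow.mono (Set.range_comp_subset_range e R.deg)
  finite_deg_eq N := (R.finite_deg_eq N).preimage e.injective.injOn

lemma sum_comap (R : MonomialFamily α) (e : β ≃ α) : (R.comap e).sum = R.sum :=
  SummableFamily.hsum_equiv e.symm R.toSummableFamily

lemma sum_eq_of_equiv {R₁ : MonomialFamily α} {R₂ : MonomialFamily β} (e : β ≃ α)
    (hdeg : ∀ y, R₁.deg (e y) = R₂.deg y) (hcoeff : ∀ y, R₁.coeff (e y) = R₂.coeff y) :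
    R₁.sum = R₂.sum := by
  obtain ⟨deg₂, coeff₂, _, _⟩ := R₂
  obtain rfl : deg₂ = R₁.deg ∘ e := funext fun y => (hdeg y).symm
  obtain rfl : coeff₂ = R₁.coeff ∘ e := funext fun y => (hcoeff y).symm
  exact (R₁.sum_comap e).symm

def one (ι : Type*) [Unique ι] : MonomialFamily ι where
  deg _ := 0
  coeff _ := 1
  deg_bddBelow := ⟨0, by rintro _ ⟨_, rfl⟩; exact le_rfl⟩
  finite_deg_eq _ := Set.toFinite _

lemma sum_one (ι : Type*) [Unique ι] : (one ι).sum = 1 :=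
  SummableFamily.hsum_unique _

def pow (R : MonomialFamily α) : (p : ℕ) → MonomialFamily (Fin p → α)
  | 0 => one _
  | p + 1 => (R.mul (R.pow p)).comap (Fin.consEquiv fun _ => α).symm

lemma sum_pow (R : MonomialFamily α) (p : ℕ) : (R.pow p).sum = R.sum ^ p := by
  induction p with
  | zero => exact sum_one _
  | succ p ih => rw [pow, sum_comap, sum_mul, ih, pow_succ']

lemma pow_deg (R : MonomialFamily α) (p : ℕ) (v : Fin p → α) :
    (R.pow p).deg v = ∑ i, R.deg (v i) := by
  induction p with
  | zero => rfl
  | succ p ih =>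
    show R.deg _ + (R.pow p).deg _ = _
    rw [ih, Fin.sum_univ_succ]
    rfl

lemma pow_coeff (R : MonomialFamily α) (p : ℕ) (v : Fin p → α) :
    (R.pow p).coeff v = ∏ i, R.coeff (v i) := by
  induction p with
  | zero => rfl
  | succ p ih =>
    show R.coeff _ * (R.pow p).coeff _ = _
    rw [ih, Fin.prod_univ_succ]
    rfl

lemma coeff_sum_eq_zero_of_involution (R : MonomialFamily α) {N : ℤ} (ι : α → α)
    (hι : ∀ x, R.deg x = N →
      R.deg (ι x) = N ∧ ι (ι x) = x ∧ R.coeff (ι x) = -R.coeff x) :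
    R.sum.coeff N = 0 := by
  rw [coeff_sum]
  refine sum_eq_zero_of_involution_neg ι fun x hx => ?_
  rw [mem_fiber] at hx ⊢
  exact hι x hx

def restrict (R : MonomialFamily α) (S : Set α) : MonomialFamily S where
  deg := R.deg ∘ Subtype.val
  coeff := R.coeff ∘ Subtype.val
  deg_bddBelow := R.deg_bddBelow.mono (Set.range_comp_subset_range _ R.deg)
  finite_deg_eq N := (R.finite_deg_eq N).preimage Subtype.val_injective.injOn

lemma sum_restrict_of_involution (R : MonomialFamily α) (S : Set α) (ι : α → α)
    (hι : ∀ x ∉ S,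
      ι x ∉ S ∧ R.deg (ι x) = R.deg x ∧ ι (ι x) = x ∧ R.coeff (ι x) = -R.coeff x) :
    (R.restrict S).sum = R.sum := by
  ext N
  have hfiber : (R.restrict S).fiber N = (R.fiber N).subtype (· ∈ S) := by
    ext x
    simp [restrict]
  have hcancel : ∑ x ∈ R.fiber N with x ∉ S, R.coeff x = 0 := by
    refine sum_eq_zero_of_involution_neg ι fun x hx => ?_
    simp only [Finset.mem_filter, mem_fiber] at hx ⊢
    obtain ⟨hιS, hdeg, hιι, hcoeff⟩ := hι x hx.2
    exact ⟨⟨hdeg.trans hx.1, hιS⟩, hιι, hcoeff⟩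
  rw [coeff_sum, coeff_sum, hfiber, ← Finset.sum_filter_add_sum_filter_not _ (· ∈ S), hcancel,
    add_zero, ← Finset.sum_subtype_eq_sum_filter]
  rfl

end MonomialFamily

def thetaDeg (r s n : ℤ) : ℤ := r * (n * (n + 1) / 2) + s * (n * (n - 1) / 2)

lemma two_mul_thetaDeg (r s n : ℤ) : 2 * thetaDeg r s n = (r + s) * n ^ 2 + (r - s) * n := by
  obtain ⟨a, ha⟩ := Int.even_mul_succ_self n
  obtain ⟨b, hb⟩ := Int.even_mul_pred_self n
  have h₁ : n * (n + 1) / 2 = a := by omega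
  have h₂ : n * (n - 1) / 2 = b := by omega
  rw [thetaDeg, h₁, h₂]
  linear_combination -r * ha - s * hb

lemma two_mul_thetaDeg_sub (r s α x : ℤ) :
    2 * thetaDeg r s (α - x) = 2 * thetaDeg r s x + ((r + s) * α + (r - s)) * (α - 2 * x) := by
  rw [two_mul_thetaDeg, two_mul_thetaDeg]
  ring

lemma dvd_thetaDeg_sub (r s n : ℤ) : r + s ∣ thetaDeg r s n - r * n := by
  obtain ⟨b, hb⟩ := Int.even_mul_pred_self n
  refine ⟨b, mul_left_cancel₀ (two_ne_zero' ℤ) ?_⟩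
  linear_combination two_mul_thetaDeg r s n + (r + s) * hb

lemma finite_thetaDeg_eq {r s : ℤ} (h : 0 < r + s) (N : ℤ) :
    {n | thetaDeg r s n = N}.Finite := by
  refine (Set.finite_Icc (-(|r - s| + 2 * |N|)) (|r - s| + 2 * |N|)).subset fun n hn => ?_
  have h2 := two_mul_thetaDeg r s n
  rw [show thetaDeg r s n = N from hn] at h2
  have hsq : n ^ 2 ≤ (r + s) * n ^ 2 := le_mul_of_one_le_left (sq_nonneg n) h
  rw [Set.mem_Icc, ← abs_le]
  by_contra! hlt
  have hc : -(r - s) * n ≤ |r - s| * |n| := by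
    rw [← abs_neg (r - s), ← abs_mul]; exact le_abs_self _
  have hN : 2 * N ≤ 2 * |N| * |n| := by
    nlinarith [le_abs_self N, abs_nonneg N, abs_nonneg (r - s)]
  nlinarith [sq_abs n, abs_nonneg (r - s), abs_nonneg N]

lemma neg_sq_le_thetaDeg {r s : ℤ} (h : 0 < r + s) (n : ℤ) :
    -(r - s) ^ 2 ≤ thetaDeg r s n := by
  nlinarith [two_mul_thetaDeg r s n, sq_nonneg (2 * n + (r - s)), sq_nonneg (r - s),
    mul_nonneg (show 0 ≤ r + s - 1 by omega) (sq_nonneg n)]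

def thetaFamily (ε r s : ℤ) (h : 0 < r + s) : MonomialFamily ℤ where
  deg := thetaDeg r s
  coeff n := (ε : ℚ) ^ n
  deg_bddBelow := ⟨-(r - s) ^ 2, by rintro _ ⟨n, rfl⟩; exact neg_sq_le_thetaDeg h n⟩
  finite_deg_eq := finite_thetaDeg_eq h

lemma theta_eq_sum (ε r s : ℤ) (h : 0 < r + s) : theta ε r s = (thetaFamily ε r s h).sum := by
  ext N
  rw [MonomialFamily.coeff_sum, theta, dif_pos h]
  refine (finsum_eq_sum_of_support_subset _ fun n hn => ?_).trans
    (Finset.sum_congr rfl fun n hn => if_pos (MonomialFamily.mem_fiber.1 hn))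
  rw [Finset.mem_coe, MonomialFamily.mem_fiber]
  by_contra hne
  exact hn (if_neg hne)

lemma coeff_theta_zero (ε : ℤ) {r s : ℤ} (h : 0 < r + s)
    (h0 : ∀ n, (r + s) * n = s - r → n = 0) : (theta ε r s).coeff 0 = 1 := by
  have hfiber : (thetaFamily ε r s h).fiber 0 = {0} := by
    ext n
    rw [MonomialFamily.mem_fiber, Finset.mem_singleton]
    refine ⟨fun hn => ?_, fun hn => by simp [hn, thetaFamily, thetaDeg]⟩
    have h2 : n * ((r + s) * n - (s - r)) = 0 := by
      have hn' : thetaDeg r s n = 0 := hn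
      linear_combination 2 * hn' - two_mul_thetaDeg r s n
    rcases mul_eq_zero.1 h2 with hn | hn
    · exact hn
    · exact h0 n (sub_eq_zero.1 hn)
  rw [theta_eq_sum ε r s h, MonomialFamily.coeff_sum, hfiber, Finset.sum_singleton]
  simp [thetaFamily]

lemma theta_ne_zero (ε : ℤ) {r s : ℤ} (h : 0 < r + s)
    (h0 : ∀ n, (r + s) * n = s - r → n = 0) : theta ε r s ≠ 0 := fun hθ => by
  simpa [hθ] using coeff_theta_zero ε h h0

def SupportedOnMultiples (M : ℤ) (G : LaurentSeries ℚ) : Prop :=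
  ∀ N, ¬ M ∣ N → G.coeff N = 0

lemma theta_supportedOnMultiples (ε : ℤ) {M r s : ℤ} (hr : M ∣ r) (hs : M ∣ s) :
    SupportedOnMultiples M (theta ε r s) := by
  intro N hN
  unfold theta
  split_ifs
  · refine finsum_eq_zero_of_forall_eq_zero fun n => if_neg fun hn => hN ?_
    rw [← hn]
    exact dvd_add (hr.mul_right _) (hs.mul_right _)
  · rfl

lemma huff_mul_of_supportedOnMultiples {M : ℤ} (X : LaurentSeries ℚ) {Z : LaurentSeries ℚ}
    (hZ : SupportedOnMultiples M Z) : huff M (X * Z) = huff M X * Z := by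
  ext N
  have hsupp : (huff M X).support ⊆ X.support := fun i hi hXi => hi (by simp [huff, hXi])
  have hterm : ∀ ij ∈ Finset.antidiagonal X.isPWO_support Z.isPWO_support N,
      (huff M X).coeff ij.1 * Z.coeff ij.2
        = if M ∣ N then X.coeff ij.1 * Z.coeff ij.2 else 0 := by
    intro ij hij
    obtain ⟨-, hj, hij⟩ := Finset.mem_antidiagonal.1 hij
    have hMj : M ∣ ij.2 := by_contra fun h => hj (hZ _ h)
    have hdvd : M ∣ ij.1 ↔ M ∣ N := by rw [← hij]; exact (dvd_add_left hMj).symm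
    simp only [huff, hdvd]
    split_ifs <;> simp
  rw [coeff_mul_left' X.isPWO_support hsupp, Finset.sum_congr rfl hterm]
  show (if M ∣ N then (X * Z).coeff N else 0) = _
  split_ifs <;> simp [coeff_mul]

lemma huff_eq_self {M : ℤ} {G : LaurentSeries ℚ} (hG : SupportedOnMultiples M G) :
    huff M G = G := by
  ext N
  show (if M ∣ N then G.coeff N else 0) = _
  split_ifs with hN
  · rfl
  · exact (hG N hN).symm

lemma SupportedOnMultiples.mul {M : ℤ} {X Z : LaurentSeries ℚ} (hX : SupportedOnMultiples M X)
    (hZ : SupportedOnMultiples M Z) : SupportedOnMultiples M (X * Z) := fun N hN => by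
  rw [← huff_eq_self hX, ← huff_mul_of_supportedOnMultiples X hZ]
  exact if_neg hN

lemma SupportedOnMultiples.pow {M : ℤ} {X : LaurentSeries ℚ} (hX : SupportedOnMultiples M X)
    (p : ℕ) : SupportedOnMultiples M (X ^ p) := by
  induction p with
  | zero =>
    intro N hN
    rw [pow_zero, coeff_one, if_neg]
    rintro rfl
    exact hN (dvd_zero M)
  | succ p ih => rw [pow_succ]; exact ih.mul hX

lemma huff_mul_inv_eq_zero {M : ℤ} {Y Z : LaurentSeries ℚ} (hZ : SupportedOnMultiples M Z)
    (hZ0 : Z ≠ 0) (hY : huff M Y = 0) : huff M (Y * Z⁻¹) = 0 := by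
  have : huff M (Y * Z⁻¹) * Z = 0 := by
    rw [← huff_mul_of_supportedOnMultiples _ hZ, inv_mul_cancel_right₀ hZ0, hY]
  exact (mul_eq_zero.1 this).resolve_right hZ0

lemma zpow_eq_zpow_of_even_sub {η : ℚ} (hη : η = 1 ∨ η = -1) {x y : ℤ}
    (h : Even (x - y)) :
    η ^ x = η ^ y := by
  rcases hη with rfl | rfl
  · simp
  · rw [← sub_add_cancel x y, zpow_add₀ (by norm_num), h.neg_one_zpow, one_mul]

lemma neg_one_zpow_eq_neg_of_odd_sub {x y : ℤ} (h : Odd (x - y)) :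
    (-1 : ℚ) ^ x = -(-1) ^ y := by
  rw [← sub_add_cancel x y, zpow_add₀ (by norm_num), h.neg_one_zpow, neg_one_mul]

lemma neg_zpow_eq_neg_one_zpow_mul (η : ℚ) (x : ℤ) : (-η) ^ x = (-1) ^ x * η ^ x := by
  rw [← mul_zpow, neg_one_mul]

def evenSumEquiv : ℤ × ℤ ≃ {x : ℤ × ℤ // Even (x.1 + x.2)} where
  toFun pv := ⟨(pv.1 + pv.2, pv.1 - pv.2), pv.1, by ring⟩
  invFun x := ((x.1.1 + x.1.2) / 2, (x.1.1 - x.1.2) / 2)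
  left_inv pv := Prod.ext (by dsimp only; omega) (by dsimp only; omega)
  right_inv x := by
    obtain ⟨⟨a, b⟩, c, hc⟩ := x
    exact Subtype.ext (Prod.ext (by dsimp only at hc ⊢; omega) (by dsimp only at hc ⊢; omega))

lemma theta_mul_theta_neg_eq_theta_mul_phi (ε k t : ℤ) (ht : 0 < t)
    (hε : (ε : ℚ) = 1 ∨ (ε : ℚ) = -1) :
    theta ε k (t - k) * theta (-ε) k (t - k)
      = theta (-1) (2 * k) (2 * t - 2 * k) * theta (-1) t t := by
  have h₁ : 0 < k + (t - k) := by omega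
  have h₂ : 0 < 2 * k + (2 * t - 2 * k) := by omega
  have h₃ : 0 < t + t := by omega
  rw [theta_eq_sum ε _ _ h₁, theta_eq_sum (-ε) _ _ h₁, theta_eq_sum (-1) _ _ h₂,
    theta_eq_sum (-1) _ _ h₃, ← MonomialFamily.sum_mul, ← MonomialFamily.sum_mul,
    ← MonomialFamily.sum_restrict_of_involution _ {x | Even (x.1 + x.2)} Prod.swap]
  · refine MonomialFamily.sum_eq_of_equiv evenSumEquiv (fun pv => ?_) (fun pv => ?_)
    · apply mul_left_cancel₀ (two_ne_zero' ℤ)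
      simp only [MonomialFamily.restrict, MonomialFamily.mul, thetaFamily, evenSumEquiv,
        Function.comp_apply, Equiv.coe_fn_mk, mul_add, two_mul_thetaDeg]
      ring
    · simp only [MonomialFamily.restrict, MonomialFamily.mul, thetaFamily, evenSumEquiv,
        Function.comp_apply, Equiv.coe_fn_mk, Int.cast_neg, Int.cast_one]
      have hε0 : (ε : ℚ) ≠ 0 := by rcases hε with h | h <;> rw [h] <;> norm_num
      rw [neg_zpow_eq_neg_one_zpow_mul, mul_left_comm, ← zpow_add₀ hε0,
        zpow_eq_zpow_of_even_sub hε (y := 0) ⟨pv.1, by ring⟩, zpow_zero, mul_one,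
        zpow_eq_zpow_of_even_sub (Or.inr rfl) (y := pv.1 + pv.2) ⟨-pv.2, by ring⟩,
        zpow_add₀ (by norm_num)]
  · rintro ⟨x, y⟩ (hxy : ¬ Even (x + y))
    refine ⟨by simpa [add_comm] using hxy, add_comm _ _, rfl, ?_⟩
    simp only [MonomialFamily.mul, thetaFamily, Prod.swap, Int.cast_neg]
    have hodd : Odd (x - y) := by
      rw [← Int.not_even_iff_odd]
      exact fun h => hxy (by simpa [two_mul] using h.add (even_two_mul y))
    rw [neg_zpow_eq_neg_one_zpow_mul (ε : ℚ) x, neg_zpow_eq_neg_one_zpow_mul (ε : ℚ) y,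
      neg_one_zpow_eq_neg_of_odd_sub hodd]
    ring

def evenOddEquiv : ℤ × ℤ ≃ ℤ × ℤ where
  toFun ab :=
    let y := if Even ab.2 then ab.1 - ab.2 / 2 else -(ab.2 / 2) - ab.1
    (y + ab.2, y)
  invFun xy :=
    let b := xy.1 - xy.2
    (if Even b then xy.2 + b / 2 else -(b / 2) - xy.2, b)
  left_inv ab := by
    obtain ⟨a, b⟩ := ab
    simp only [Int.even_iff]
    split_ifs <;> ext <;> dsimp only <;> omega
  right_inv xy := by
    obtain ⟨x, y⟩ := xy
    simp only [Int.even_iff]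
    split_ifs <;> ext <;> dsimp only <;> omega

lemma theta_mul_theta_eq_theta_mul_psi (k t : ℤ) (ht : 0 < t) :
    theta (-1) (2 * k) (2 * t - 2 * k) * theta (-1) (t - 2 * k) (t + 2 * k)
      = theta 1 t (3 * t) * theta (-1) (2 * k) (t - 2 * k) := by
  have h₁ : 0 < 2 * k + (2 * t - 2 * k) := by omega
  have h₂ : 0 < t - 2 * k + (t + 2 * k) := by omega
  have h₃ : 0 < t + 3 * t := by omega
  have h₄ : 0 < 2 * k + (t - 2 * k) := by omega
  rw [theta_eq_sum (-1) _ _ h₁, theta_eq_sum (-1) _ _ h₂, theta_eq_sum 1 _ _ h₃,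
    theta_eq_sum (-1) _ _ h₄, ← MonomialFamily.sum_mul, ← MonomialFamily.sum_mul]
  refine MonomialFamily.sum_eq_of_equiv evenOddEquiv (fun ab => ?_) (fun ab => ?_)
  · obtain ⟨a, b⟩ := ab
    apply mul_left_cancel₀ (two_ne_zero' ℤ)
    simp only [MonomialFamily.mul, thetaFamily, evenOddEquiv, Equiv.coe_fn_mk, mul_add,
      two_mul_thetaDeg]
    rcases Int.even_or_odd' b with ⟨d, rfl | rfl⟩
    · rw [if_pos (even_two_mul d), Int.mul_ediv_cancel_left _ two_ne_zero]
      ring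
    · rw [if_neg (Int.not_even_two_mul_add_one d), show (2 * d + 1) / 2 = d by omega]
      ring
  · simp only [MonomialFamily.mul, thetaFamily, evenOddEquiv, Equiv.coe_fn_mk, Int.cast_neg,
      Int.cast_one, one_zpow, one_mul]
    rw [← zpow_add₀ (by norm_num)]
    exact zpow_eq_zpow_of_even_sub (Or.inr rfl) ⟨_, by ring⟩

def thetaProductFamily (ε η k t : ℤ) (ht : 0 < t) (a b : ℕ) :
    MonomialFamily ((Fin a → ℤ) × (Fin b → ℤ × ℤ)) :=
  ((thetaFamily ε k (t - k) (by omega)).pow a).mul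
    (((thetaFamily η k (t - k) (by omega)).mul
      (thetaFamily (-1) (t - 2 * k) (t + 2 * k) (by omega))).pow b)

section Reflection

variable {a b : ℕ}

def weight (v : (Fin a → ℤ) × (Fin b → ℤ × ℤ)) : ℤ :=
  ∑ i, v.1 i + ∑ j, (v.2 j).1 - 2 * ∑ j, (v.2 j).2

def reflect (α : ℤ) (v : (Fin a → ℤ) × (Fin b → ℤ × ℤ)) :
    (Fin a → ℤ) × (Fin b → ℤ × ℤ) :=
  (fun i => α - v.1 i, fun j => (α - (v.2 j).1, 1 - α - (v.2 j).2))

lemma reflect_reflect (α : ℤ) (v : (Fin a → ℤ) × (Fin b → ℤ × ℤ)) :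
    reflect α (reflect α v) = v := by
  ext <;> simp [reflect]

lemma weight_reflect (α : ℤ) (v : (Fin a → ℤ) × (Fin b → ℤ × ℤ)) :
    weight (reflect α v) = (a + 3 * b) * α - 2 * b - weight v := by
  simp only [weight, reflect, Finset.sum_sub_distrib, Finset.sum_const, Finset.card_univ,
    Fintype.card_fin, nsmul_eq_mul]
  ring

variable {ε η k t : ℤ} {ht : 0 < t}

lemma thetaProductFamily_sum : (thetaProductFamily ε η k t ht a b).sum
    = theta ε k (t - k) ^ a * (theta η k (t - k) * theta (-1) (t - 2 * k) (t + 2 * k)) ^ b := by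
  rw [thetaProductFamily, MonomialFamily.sum_mul, MonomialFamily.sum_pow, MonomialFamily.sum_pow,
    MonomialFamily.sum_mul, ← theta_eq_sum, ← theta_eq_sum, ← theta_eq_sum]

lemma thetaProductFamily_deg (v : (Fin a → ℤ) × (Fin b → ℤ × ℤ)) :
    (thetaProductFamily ε η k t ht a b).deg v = ∑ i, thetaDeg k (t - k) (v.1 i)
      + ∑ j, (thetaDeg k (t - k) (v.2 j).1 + thetaDeg (t - 2 * k) (t + 2 * k) (v.2 j).2) := by
  simp [thetaProductFamily, MonomialFamily.mul, MonomialFamily.pow_deg, thetaFamily]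

lemma thetaProductFamily_coeff (v : (Fin a → ℤ) × (Fin b → ℤ × ℤ)) :
    (thetaProductFamily ε η k t ht a b).coeff v = (∏ i, (ε : ℚ) ^ v.1 i)
      * ∏ j, ((η : ℚ) ^ (v.2 j).1 * (-1) ^ (v.2 j).2) := by
  simp [thetaProductFamily, MonomialFamily.mul, MonomialFamily.pow_coeff, thetaFamily]

lemma dvd_thetaProductFamily_deg_sub (v : (Fin a → ℤ) × (Fin b → ℤ × ℤ)) :
    t ∣ (thetaProductFamily ε η k t ht a b).deg v - k * weight v := by
  have hA (x : ℤ) : t ∣ thetaDeg k (t - k) x - k * x := by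
    simpa using dvd_thetaDeg_sub k (t - k) x
  have hD (z : ℤ) : t ∣ thetaDeg (t - 2 * k) (t + 2 * k) z - k * (-2 * z) := by
    obtain ⟨c, hc⟩ := dvd_thetaDeg_sub (t - 2 * k) (t + 2 * k) z
    exact ⟨2 * c + z, by linear_combination hc⟩
  have hsplit : (thetaProductFamily ε η k t ht a b).deg v - k * weight v
      = ∑ i, (thetaDeg k (t - k) (v.1 i) - k * v.1 i)
        + ∑ j, ((thetaDeg k (t - k) (v.2 j).1 - k * (v.2 j).1)
          + (thetaDeg (t - 2 * k) (t + 2 * k) (v.2 j).2 - k * (-2 * (v.2 j).2))) := by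
    simp only [thetaProductFamily_deg, weight, Finset.sum_add_distrib, Finset.sum_sub_distrib,
      ← Finset.mul_sum]
    ring
  rw [hsplit]
  exact dvd_add (Finset.dvd_sum fun i _ => hA _)
    (Finset.dvd_sum fun j _ => dvd_add (hA _) (hD _))

lemma two_mul_thetaProductFamily_deg_reflect (α : ℤ)
    (v : (Fin a → ℤ) × (Fin b → ℤ × ℤ)) :
    2 * (thetaProductFamily ε η k t ht a b).deg (reflect α v)
      = 2 * (thetaProductFamily ε η k t ht a b).deg v
        + (t * α + 2 * k - t) * (weight (reflect α v) - weight v) := by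
  simp only [thetaProductFamily_deg, reflect, mul_add, Finset.mul_sum, two_mul_thetaDeg_sub]
  simp only [weight, Finset.sum_add_distrib, Finset.sum_sub_distrib, ← Finset.mul_sum,
    Finset.sum_const, Finset.card_univ, Fintype.card_fin, nsmul_eq_mul]
  ring

lemma thetaProductFamily_coeff_reflect (hε : (ε : ℚ) = 1 ∨ (ε : ℚ) = -1)
    (hη : (η : ℚ) = 1 ∨ (η : ℚ) = -1) (hb : Odd b) {α : ℤ} (hα : Even α)
    (v : (Fin a → ℤ) × (Fin b → ℤ × ℤ)) :
    (thetaProductFamily ε η k t ht a b).coeff (reflect α v)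
      = -(thetaProductFamily ε η k t ht a b).coeff v := by
  obtain ⟨c, rfl⟩ := hα
  have hsub (x : ℤ) : Even (c + c - x - x) := ⟨c - x, by ring⟩
  have hodd (z : ℤ) : Odd (1 - (c + c) - z - z) := ⟨-c - z, by ring⟩
  simp only [thetaProductFamily_coeff, reflect, zpow_eq_zpow_of_even_sub hε (hsub _),
    zpow_eq_zpow_of_even_sub hη (hsub _), neg_one_zpow_eq_neg_of_odd_sub (hodd _), mul_neg,
    Finset.prod_neg, Finset.card_univ, Fintype.card_fin, hb.neg_one_pow]
  ring

end Reflection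

theorem coeff_theta_pow_mul_eq_zero {ε η k t : ℤ} {a b : ℕ} (ht : 0 < t)
    (hε : (ε : ℚ) = 1 ∨ (ε : ℚ) = -1) (hη : (η : ℚ) = 1 ∨ (η : ℚ) = -1)
    (hb : Odd b) (hMt : (a + 3 * b : ℤ) ∣ t) (hk : IsCoprime (a + 3 * b : ℤ) k) {N : ℤ}
    (hN : (a + 3 * b : ℤ) ∣ N - (a + 2 * b) * k) :
    (theta ε k (t - k) ^ a * (theta η k (t - k) * theta (-1) (t - 2 * k) (t + 2 * k)) ^ b).coeff N
      = 0 := by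
  have hM0 : (a + 3 * b : ℤ) ≠ 0 := by
    have := hb.pos
    omega
  rw [← thetaProductFamily_sum (ht := ht)]
  refine MonomialFamily.coeff_sum_eq_zero_of_involution _
    (fun v => reflect (2 + 2 * ((weight v - (a + 2 * b)) / (a + 3 * b))) v) fun v hv => ?_
  obtain ⟨w, hw⟩ : (a + 3 * b : ℤ) ∣ weight v - (a + 2 * b) := by
    refine hk.dvd_of_dvd_mul_left ?_
    have := dvd_sub hN
      (hMt.trans (dvd_thetaProductFamily_deg_sub (ε := ε) (η := η) (k := k) (ht := ht) v))
    rwa [hv, show N - (a + 2 * b) * k - (N - k * weight v) = k * (weight v - (a + 2 * b)) by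
      ring] at this
  have hα : (weight v - (a + 2 * b)) / (a + 3 * b) = w := by
    rw [hw, Int.mul_ediv_cancel_left _ hM0]
  have hL : weight (reflect (2 + 2 * w) v) = weight v := by
    rw [weight_reflect]
    linear_combination (-2 : ℤ) * hw
  rw [hα, hL, hα, reflect_reflect]
  refine ⟨mul_left_cancel₀ (two_ne_zero' ℤ) ?_, rfl,
    thetaProductFamily_coeff_reflect hε hη hb ⟨1 + w, by ring⟩ v⟩
  rw [two_mul_thetaProductFamily_deg_reflect, hL, sub_self, mul_zero, add_zero, hv]

lemma theta_psi_ne_zero {t : ℤ} (ht : 0 < t) : theta 1 t (3 * t) ≠ 0 :=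
  theta_ne_zero 1 (by omega) fun n hn => by
    rcases mul_eq_zero.1 (show t * (4 * n - 2) = 0 by linarith) with h | h <;> omega

lemma theta_phi_ne_zero {t : ℤ} (ht : 0 < t) : theta (-1) t t ≠ 0 :=
  theta_ne_zero (-1) (by omega) fun n hn => by
    rcases mul_eq_zero.1 (show (t + t) * n = 0 by linarith) with h | h <;> omega

lemma theta_ne_zero_of_isCoprime (ε : ℤ) {M k t : ℤ} (ht : 0 < t) (hMt : M ∣ t)
    (hk : IsCoprime M k) (hM2 : ¬ M ∣ 2) : theta ε k (t - k) ≠ 0 :=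
  theta_ne_zero ε (by omega) fun n hn => by
    refine absurd (hk.dvd_of_dvd_mul_left ?_) hM2
    rw [show k * 2 = t * (1 - n) by linarith]
    exact hMt.mul_right _

lemma huff_single_mul_eq_zero {M σ : ℤ} {X : LaurentSeries ℚ}
    (hX : ∀ N, M ∣ N + σ → X.coeff N = 0) : huff M (single σ 1 * X) = 0 := by
  ext N
  show (if M ∣ N then _ else 0) = 0
  split_ifs with hN
  · rw [coeff_single_mul, one_mul]
    exact hX _ (by rwa [sub_add_cancel])
  · rfl

lemma theta_div_theta_eq (ε k t : ℤ) (ht : 0 < t) (hε : (ε : ℚ) = 1 ∨ (ε : ℚ) = -1)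
    (hθ : theta ε k (t - k) ≠ 0) :
    theta (-1) (2 * k) (t - 2 * k) / theta ε k (t - k)
      = theta (-ε) k (t - k) * theta (-1) (t - 2 * k) (t + 2 * k)
        / (theta 1 t (3 * t) * theta (-1) t t) := by
  rw [div_eq_div_iff hθ (mul_ne_zero (theta_psi_ne_zero ht) (theta_phi_ne_zero ht))]
  linear_combination -theta (-1) t t * theta_mul_theta_eq_theta_mul_psi k t ht
    - theta (-1) (t - 2 * k) (t + 2 * k) * theta_mul_theta_neg_eq_theta_mul_phi ε k t ht hε

theorem statement0_general (μ ℓ m k M σ : ℤ) (hμ : 1 ≤ μ) (hℓ : 0 ≤ ℓ) (hm : 0 ≤ m)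
    (hM : M = 2 * ℓ + 6 * m + 3) (hσ : σ = -(2 * ℓ + 4 * m + 2) * k)
    (κ lam : ℕ) (hk : Int.gcd k M = 1) :
    huff M (HahnSeries.single σ (1 : ℚ)
      * theta ((-1) ^ κ) k (μ * M - k) ^ (2 * ℓ)
      * (theta (-1) (2 * k) (μ * M - 2 * k)
          / theta ((-1) ^ lam) k (μ * M - k)) ^ (2 * m + 1)) = 0 := by
  lift ℓ to ℕ using hℓ
  lift m to ℕ using hm
  set t := μ * M
  have ht : 0 < t := by nlinarith
  have hMt : M ∣ t := dvd_mul_left M μ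
  have hkM : IsCoprime M k := Int.isCoprime_iff_gcd_eq_one.2 (by rwa [Int.gcd_comm])
  have hsign (n : ℕ) : (((-1) ^ n : ℤ) : ℚ) = 1 ∨ (((-1) ^ n : ℤ) : ℚ) = -1 := by
    push_cast
    exact neg_one_pow_eq_or ℚ n
  have hM2 : ¬ M ∣ 2 := fun h => by have := Int.le_of_dvd two_pos h; omega
  rw [theta_div_theta_eq _ k t ht (hsign lam) (theta_ne_zero_of_isCoprime _ ht hMt hkM hM2),
    show 2 * (ℓ : ℤ) = ((2 * ℓ : ℕ) : ℤ) by push_cast; ring,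
    show 2 * (m : ℤ) + 1 = ((2 * m + 1 : ℕ) : ℤ) by push_cast; ring, zpow_natCast,
    zpow_natCast, div_pow, mul_div_assoc', div_eq_mul_inv, mul_assoc (single σ 1)]
  refine huff_mul_inv_eq_zero (((theta_supportedOnMultiples 1 hMt (hMt.mul_left 3)).mul
    (theta_supportedOnMultiples (-1) hMt hMt)).pow _)
    (pow_ne_zero _ (mul_ne_zero (theta_psi_ne_zero ht) (theta_phi_ne_zero ht)))
    (huff_single_mul_eq_zero fun N hN => ?_)
  have hab : M = ((2 * ℓ : ℕ) : ℤ) + 3 * ((2 * m + 1 : ℕ) : ℤ) := by push_cast; omega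
  rw [hab] at hMt hkM hN
  refine coeff_theta_pow_mul_eq_zero ht (hsign κ) ?_ (by simp) hMt hkM ?_
  · rcases hsign lam with h | h <;> simp [h]
  · convert hN using 1
    rw [hσ]
    push_cast
    ring

/-- **Theorem (Type I, eq. (1.4))**: with `M = 2ℓ + 6m + 3` and
`σ = -(2ℓ + 4m + 2)k`, for `κ, λ ∈ {0,1}` and `gcd(k, M) = 1`,
`H_M(q^σ · f((-1)^κ q^k, (-1)^κ q^{μM-k})^{2ℓ} ·
  (f(-q^{2k}, -q^{μM-2k}) / f((-1)^λ q^k, (-1)^λ q^{μM-k}))^{2m+1}) = 0`. -/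
theorem statement0 (μ ℓ m k M σ : ℤ) (hμ : 1 ≤ μ) (hℓ : 0 ≤ ℓ) (hm : 0 ≤ m)
    (hM : M = 2 * ℓ + 6 * m + 3) (hσ : σ = -(2 * ℓ + 4 * m + 2) * k)
    (κ lam : ℕ) (hκ : κ = 0 ∨ κ = 1) (hlam : lam = 0 ∨ lam = 1)
    (hk : Int.gcd k M = 1) :
    huff M (HahnSeries.single σ (1 : ℚ)
      * theta ((-1) ^ κ) k (μ * M - k) ^ (2 * ℓ)
      * (theta (-1) (2 * k) (μ * M - 2 * k)
          / theta ((-1) ^ lam) k (μ * M - k)) ^ (2 * m + 1)) = 0 :=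
  statement0_general μ ℓ m k M σ hμ hℓ hm hM hσ κ lam hk

end ThetaVanish
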